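/- (q-Burke property.) Let q ∈ (0,1) and α, β ∈ (0,1) be real, and let u, v, x be natural numbers. Then ∑_{y=0}^{min(u,v)} [ (αβ)^y (αβ;q)_∞/(y)_q ] · [ α^{u+x−y} (α;q)_∞/(u+x−y)_q ] · [ β^{v+x−y} (β;q)_∞/(v+x−y)_q ] · q^{(u−y)(v−y)} (u+x−y)_q (v+x−y)_q / ( (x)_q (u−y)_q (v−y)_q ) = [ (αβ)^x (αβ;q)_∞/(x)_q ] · [ α^{u} (α;q)_∞/(u)_q ] · [ β^{v} (β;q)_∞/(v)_q ]. (Equivalently: if U ~ qGeom(α), V ~ qGeom(β), X ~ qGeom(αβ) are independent, X′ given (U,V) is distributed as qHyp(U,∞,V), and U′ = U + X − X′, V′ = V + X − X′, then (U′, V′, X′) has the same joint distribution as (U, V, X).) -/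
import Mathlib


open Finset

/-- `(x; q)_k` : the finite q-Pochhammer symbol `∏_{i=0}^{k-1} (1 - x qⁱ)`. -/
noncomputable def qPoch (q x : ℝ) (k : ℕ) : ℝ := ∏ i ∈ Finset.range k, (1 - x * q ^ i)

/-- `(x; q)_∞` : the infinite q-Pochhammer symbol `∏_{i=0}^{∞} (1 - x qⁱ)`. -/
noncomputable def qPochInf (q x : ℝ) : ℝ := ∏' i : ℕ, (1 - x * q ^ i)

/-- `(n)_q := (q; q)_n = ∏_{i=1}^{n} (1 - qⁱ)`. -/
noncomputable def qFac (q : ℝ) (n : ℕ) : ℝ := qPoch q q n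

/-- The q-binomial coefficient `binom(n,k)_q = (n)_q / ((k)_q (n-k)_q)`. -/
noncomputable def qBinom (q : ℝ) (n k : ℕ) : ℝ := qFac q n / (qFac q k * qFac q (n - k))

lemma qFac_zero (q : ℝ) : qFac q 0 = 1 := by simp [qFac, qPoch]

lemma qFac_succ (q : ℝ) (n : ℕ) : qFac q (n+1) = qFac q n * (1 - q ^ (n+1)) := by
  simp [qFac, qPoch, Finset.prod_range_succ, ← pow_succ']

lemma one_sub_q_pow_pos {q : ℝ} (hq0 : 0 < q) (hq1 : q < 1) {n : ℕ} (hn : n ≠ 0) :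
    0 < 1 - q ^ n := by
  have := pow_lt_one₀ hq0.le hq1 hn
  linarith

lemma qFac_pos {q : ℝ} (hq0 : 0 < q) (hq1 : q < 1) (n : ℕ) : 0 < qFac q n := by
  unfold qFac qPoch
  apply Finset.prod_pos
  intro i _
  have : q * q ^ i = q ^ (i+1) := (pow_succ' q i).symm
  rw [this]
  exact one_sub_q_pow_pos hq0 hq1 (Nat.succ_ne_zero i)

noncomputable def auxF (q : ℝ) (u v y : ℕ) : ℝ :=
  q ^ ((u - y) * (v - y)) / (qFac q y * qFac q (u - y) * qFac q (v - y))

lemma key (q : ℝ) (hq0 : 0 < q) (hq1 : q < 1) :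
    ∀ u v : ℕ, ∑ y ∈ Finset.range (min u v + 1), auxF q u v y
      = 1 / (qFac q u * qFac q v) := by
  intro u
  induction u with
  | zero => intro v; simp [auxF, qFac_zero]
  | succ u ih =>
    intro v
    match v with
    | 0 => simp [auxF, qFac_zero]
    | w + 1 =>
      have hmin : min (u+1) (w+1) = min u w + 1 := by omega
      have hqu : (0:ℝ) < 1 - q ^ (u+1) := one_sub_q_pow_pos hq0 hq1 (Nat.succ_ne_zero u)
      have hterm : ∀ y ∈ Finset.range (min u w + 1 + 1),
          auxF q (u+1) (w+1) y
            = ((if y ≤ min u (w+1) then q ^ (w+1) * auxF q u (w+1) y else 0)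
              + (if 1 ≤ y then auxF q u w (y-1) else 0)) / (1 - q ^ (u+1)) := by
        intro y hy
        rw [Finset.mem_range] at hy
        rw [eq_div_iff hqu.ne']
        by_cases hy0 : y = 0
        · subst hy0
          rw [if_pos (by omega), if_neg (by omega), add_zero]
          simp only [auxF, Nat.sub_zero, qFac_zero]
          rw [qFac_succ q u]
          have hp : q ^ ((u+1)*(w+1)) = q ^ (w+1) * q ^ (u*(w+1)) := by
            rw [← pow_add]; congr 1 <;> ring
          rw [hp]
          have hA := (qFac_pos hq0 hq1 u).ne'
          have hB := (qFac_pos hq0 hq1 (w+1)).ne'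
          field_simp
        · by_cases hyu : y ≤ u
          · -- middle case
            rw [if_pos (by omega), if_pos (by omega)]
            obtain ⟨z, rfl⟩ := Nat.exists_eq_succ_of_ne_zero hy0
            obtain ⟨a, rfl⟩ : ∃ a, u = z + 1 + a := ⟨u - (z+1), by omega⟩
            obtain ⟨b, rfl⟩ : ∃ b, w = z + b := ⟨w - z, by omega⟩
            have e1 : z + 1 + a + 1 - (z+1) = a + 1 := by omega
            have e2 : z + b + 1 - (z+1) = b := by omega
            have e3 : z + 1 + a - (z+1) = a := by omega
            have e0 : z + 1 - 1 = z := by omega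
            have e4 : z + 1 + a - z = a + 1 := by omega
            have e5 : z + b - z = b := by omega
            simp only [auxF, e0, e1, e2, e3, e4, e5]
            rw [qFac_succ q z, qFac_succ q a]
            have hp1 : q ^ ((a+1)*b) = q ^ (a*b) * q ^ b := by
              rw [← pow_add]; congr 1 <;> ring
            have hp2 : q ^ (z+1+a+1) = q ^ (z+1) * q ^ (a+1) := by
              rw [← pow_add]; congr 1 <;> ring
            have hp3 : q ^ (z+b+1) = q ^ (z+1) * q ^ b := by
              rw [← pow_add]; congr 1 <;> ring
            rw [hp1, hp2, hp3]
            have hFz := (qFac_pos hq0 hq1 z).ne'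
            have hFa := (qFac_pos hq0 hq1 a).ne'
            have hFb := (qFac_pos hq0 hq1 b).ne'
            have h1 := (one_sub_q_pow_pos hq0 hq1 (Nat.succ_ne_zero z)).ne'
            have h2 := (one_sub_q_pow_pos hq0 hq1 (Nat.succ_ne_zero a)).ne'
            field_simp
            ring
          · -- boundary case: y = u + 1, u ≤ w
            have hyv : y = u + 1 := by omega
            have huw : u ≤ w := by omega
            subst hyv
            obtain ⟨b, rfl⟩ : ∃ b, w = u + b := ⟨w - u, by omega⟩
            rw [if_neg (by omega), if_pos (by omega), zero_add]
            have e1 : u + 1 - (u+1) = 0 := by omega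
            have e2 : u + b + 1 - (u+1) = b := by omega
            have e0 : u + 1 - 1 = u := by omega
            have e3 : u - u = 0 := by omega
            have e4 : u + b - u = b := by omega
            simp only [auxF, e0, e1, e2, e3, e4, qFac_zero, Nat.zero_mul, pow_zero]
            rw [qFac_succ q u]
            have hFu := (qFac_pos hq0 hq1 u).ne'
            have hFb := (qFac_pos hq0 hq1 b).ne'
            field_simp
      rw [hmin, Finset.sum_congr rfl hterm, ← Finset.sum_div, Finset.sum_add_distrib]
      have h1 : ∑ y ∈ Finset.range (min u w + 1 + 1),
          (if y ≤ min u (w+1) then q ^ (w+1) * auxF q u (w+1) y else 0)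
          = q ^ (w+1) * (1 / (qFac q u * qFac q (w+1))) := by
        have hs1 := Finset.sum_subset (f := fun y =>
            if y ≤ min u (w+1) then q ^ (w+1) * auxF q u (w+1) y else 0)
          (Finset.range_subset_range.2 (by omega : min u (w+1) + 1 ≤ min u w + 1 + 1))
          (fun y hy hny => by
            rw [Finset.mem_range] at hy hny
            exact if_neg (by omega))
        have hs2 : ∑ y ∈ Finset.range (min u (w+1) + 1),
            (if y ≤ min u (w+1) then q ^ (w+1) * auxF q u (w+1) y else 0)
            = ∑ y ∈ Finset.range (min u (w+1) + 1), q ^ (w+1) * auxF q u (w+1) y :=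
          Finset.sum_congr rfl (fun y hy => by
            rw [Finset.mem_range] at hy
            rw [if_pos (by omega)])
        rw [← hs1, hs2, ← Finset.mul_sum, ih (w+1)]
      have h2 : ∑ y ∈ Finset.range (min u w + 1 + 1),
          (if 1 ≤ y then auxF q u w (y-1) else 0)
          = 1 / (qFac q u * qFac q w) := by
        rw [Finset.sum_range_succ']
        simp only [Nat.add_sub_cancel]
        rw [if_neg (by omega : ¬ (1:ℕ) ≤ 0), add_zero]
        have hcong : ∀ i ∈ Finset.range (min u w + 1),
            (if 1 ≤ i + 1 then auxF q u w i else 0) = auxF q u w i :=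
          fun i _ => if_pos (by omega)
        rw [Finset.sum_congr rfl hcong, ih w]
      rw [h1, h2, qFac_succ q u, qFac_succ q w]
      have hFu := (qFac_pos hq0 hq1 u).ne'
      have hFw := (qFac_pos hq0 hq1 w).ne'
      have hw1 := (one_sub_q_pow_pos hq0 hq1 (Nat.succ_ne_zero w)).ne'
      field_simp
      ring

/-- **The q-Burke property.** For `q, α, β ∈ (0,1)` and naturals `u, v, x`:
`∑_{y=0}^{min(u,v)} f_{qGeom(αβ)}(y) f_{qGeom(α)}(u+x-y) f_{qGeom(β)}(v+x-y)
  f_{qHyp(u+x-y,∞,v+x-y)... }` — precisely, summing the joint probability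
`P(X = y, U = u+x-y, V = v+x-y, X' = x)` over `y` gives
`f_{qGeom(αβ)}(x) f_{qGeom(α)}(u) f_{qGeom(β)}(v)`.  Equivalently, if
`U ~ qGeom(α)`, `V ~ qGeom(β)`, `X ~ qGeom(αβ)` are independent, `X'|(U,V) ~ qHyp(U,∞,V)`,
`U' = U + X - X'`, `V' = V + X - X'`, then `(U',V',X') ≝ (U,V,X)`. -/
theorem q_burke (q α β : ℝ) (hq : q ∈ Set.Ioo (0 : ℝ) 1) (hα : α ∈ Set.Ioo (0 : ℝ) 1)
    (hβ : β ∈ Set.Ioo (0 : ℝ) 1) (u v x : ℕ) :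
    ∑ y ∈ Finset.Icc 0 (min u v),
      ((α * β) ^ y * qPochInf q (α * β) / qFac q y) *
        (α ^ (u + x - y) * qPochInf q α / qFac q (u + x - y)) *
        (β ^ (v + x - y) * qPochInf q β / qFac q (v + x - y)) *
        (q ^ ((u - y) * (v - y)) * qFac q (u + x - y) * qFac q (v + x - y) /
          (qFac q x * qFac q (u - y) * qFac q (v - y)))
      = ((α * β) ^ x * qPochInf q (α * β) / qFac q x) *
          (α ^ u * qPochInf q α / qFac q u) * (β ^ v * qPochInf q β / qFac q v) := by
  obtain ⟨hq0, hq1⟩ := hq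
  obtain ⟨hα0, hα1⟩ := hα
  obtain ⟨hβ0, hβ1⟩ := hβ
  have hIcc : Finset.Icc 0 (min u v) = Finset.range (min u v + 1) := by
    ext n; simp [Nat.lt_succ_iff]
  have hC : ∀ y ∈ Finset.range (min u v + 1),
      ((α * β) ^ y * qPochInf q (α * β) / qFac q y) *
        (α ^ (u + x - y) * qPochInf q α / qFac q (u + x - y)) *
        (β ^ (v + x - y) * qPochInf q β / qFac q (v + x - y)) *
        (q ^ ((u - y) * (v - y)) * qFac q (u + x - y) * qFac q (v + x - y) /
          (qFac q x * qFac q (u - y) * qFac q (v - y)))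
      = (qPochInf q (α * β) * qPochInf q α * qPochInf q β * (α ^ (u + x) * β ^ (v + x))
          / qFac q x) * auxF q u v y := by
    intro y hy
    rw [Finset.mem_range, Nat.lt_succ_iff] at hy
    have hA : α ^ (u + x - y) = α ^ (u + x) / α ^ y := by
      rw [eq_div_iff (pow_ne_zero y hα0.ne'), ← pow_add]
      congr 1
      omega
    have hB : β ^ (v + x - y) = β ^ (v + x) / β ^ y := by
      rw [eq_div_iff (pow_ne_zero y hβ0.ne'), ← pow_add]
      congr 1
      omega
    rw [mul_pow, hA, hB]
    unfold auxF
    have n1 := (qFac_pos hq0 hq1 y).ne'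
    have n2 := (qFac_pos hq0 hq1 (u + x - y)).ne'
    have n3 := (qFac_pos hq0 hq1 (v + x - y)).ne'
    have n4 := (qFac_pos hq0 hq1 x).ne'
    have n5 := (qFac_pos hq0 hq1 (u - y)).ne'
    have n6 := (qFac_pos hq0 hq1 (v - y)).ne'
    have n7 : α ^ y ≠ 0 := pow_ne_zero y hα0.ne'
    have n8 : β ^ y ≠ 0 := pow_ne_zero y hβ0.ne'
    field_simp
  rw [hIcc, Finset.sum_congr rfl hC, ← Finset.mul_sum, key q hq0 hq1 u v]
  rw [mul_pow, pow_add, pow_add]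
  have n1 := (qFac_pos hq0 hq1 x).ne'
  have n2 := (qFac_pos hq0 hq1 u).ne'
  have n3 := (qFac_pos hq0 hq1 v).ne'
  field_simp
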